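/- Let P₀ be a distribution for Z = (Y, X, A) with density p₀ with respect to a σ-finite measure ν, satisfying |Y| ≤ C_Y almost surely, π(x) := P₀(A=1|X=x) ∈ [ε, 1−ε] almost surely, and Var₀(τ(X)) > 0 where τ(x) := μ₁(x) − μ₀(x) and μ_a(x) := E₀[Y|X=x,A=a]; set β₀ := E₀[τ(X)]. Define g_β(x) := (τ(x) − β₀)/Var₀(τ(X)) and for |t| < 1/‖g_β‖_∞ let P_t have density p_t(z) := p₀(z)(1 + t g_β(x)). Then: (1) {P_t} is a regular (QMD) submodel through P₀ with score g_β; (2) the conditional outcome means and propensity are unchanged, i.e. E_{P_t}[Y|X=x,A=a] = μ_a(x) and P_t(A=1|X=x) = π(x) for all small t; and (3) β(P_t) := E_{P_t}[μ₁^{P_t}(X) − μ₀^{P_t}(X)] = β₀ + t for all small t. -/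

import Mathlib

/-! The tilt `1 + t g_β(X)` is a function of the covariates alone, while `μ_a` and `π` are
characterised by integral identities over the events `{X ∈ B, A = a}`. Such identities say that
`μ_a(X)` and `π(X)` are conditional expectations given `X` (on `{A = a}`), so they persist after
multiplying by any bounded function of `X`, i.e. under the tilt. Bounded `Y` bounds `μ_a` on
`{A = a}`, and overlap `π ∈ [ε, 1 - ε]` spreads this bound to all of `P₀`; hence `g_β` is bounded,
`p_t` is a probability density for small `t`, and QMD follows by dominated convergence from the
derivative `g / 2` of `t ↦ √(1 + t g)` at `0`. Finally
`β(P_t) = E₀[τ (1 + t g_β)] = β₀ + t Cov₀(τ, τ) / Var₀(τ) = β₀ + t`. -/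

open MeasureTheory Filter Topology Set ENNReal

namespace ATE

variable {X : Type*} [MeasurableSpace X]

/-- An observation `z = (y, x, a)`: real outcome, covariates, binary treatment. -/
abbrev Obs (X : Type*) := ℝ × X × Bool

/-- `μa` is (a version of) the conditional outcome mean `E_P[Y | X = x, A = a]`:
it is measurable, integrable, and satisfies the defining conditional-expectation
identity against all measurable sets of covariate values. -/
def IsCondMean (P : Measure (Obs X)) (a : Bool) (μa : X → ℝ) : Prop :=
  Measurable μa ∧ Integrable (fun z : Obs X => μa z.2.1) P ∧
  ∀ B : Set X, MeasurableSet B →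
    ∫ z in {z : Obs X | z.2.1 ∈ B ∧ z.2.2 = a}, z.1 ∂P
      = ∫ z in {z : Obs X | z.2.1 ∈ B ∧ z.2.2 = a}, μa z.2.1 ∂P

/-- `pi` is (a version of) the propensity score `P(A = 1 | X = x)`. -/
def IsPropensity (P : Measure (Obs X)) (pi : X → ℝ) : Prop :=
  Measurable pi ∧
  ∀ B : Set X, MeasurableSet B →
    (P {z : Obs X | z.2.1 ∈ B ∧ z.2.2 = true}).toReal
      = ∫ z in {z : Obs X | z.2.1 ∈ B}, pi z.2.1 ∂P

/-- The AIPW estimating function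
`m(z; b, (μ1, μ0, π)) = (a/π(x))(y − μ1(x)) − ((1−a)/(1−π(x)))(y − μ0(x)) + μ1(x) − μ0(x) − b`. -/
noncomputable def aipw (μ1 μ0 pi : X → ℝ) (b : ℝ) (z : Obs X) : ℝ :=
  (if z.2.2 then (1:ℝ) else 0) / pi z.2.1 * (z.1 - μ1 z.2.1)
    - (1 - if z.2.2 then (1:ℝ) else 0) / (1 - pi z.2.1) * (z.1 - μ0 z.2.1)
    + μ1 z.2.1 - μ0 z.2.1 - b

/-- `p` is a density of `P` with respect to `ν`. -/
def IsDensityOf {Z : Type*} [MeasurableSpace Z] (ν P : Measure Z) (p : Z → ℝ) : Prop :=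
  P = ν.withDensity (fun z => ENNReal.ofReal (p z))

lemma Integrable.of_ae_mem_Icc {Ω : Type*} [MeasurableSpace Ω] {ρ : Measure Ω}
    [IsFiniteMeasure ρ] {f : Ω → ℝ} (hf : AEStronglyMeasurable f ρ) {a b : ℝ}
    (hab : ∀ᵐ ω ∂ρ, f ω ∈ Icc a b) : Integrable f ρ :=
  Integrable.of_bound hf (max |a| |b|) (hab.mono fun _ h => abs_le_max_abs_abs h.1 h.2)

lemma withDensity_ofReal_mul {Ω : Type*} [MeasurableSpace Ω] {ν : Measure Ω} {p q : Ω → ℝ}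
    (hp : Measurable p) (hq : Measurable q) (hp0 : ∀ᵐ ω ∂ν, 0 ≤ p ω) :
    ν.withDensity (fun ω => ENNReal.ofReal (p ω * q ω))
      = (ν.withDensity fun ω => ENNReal.ofReal (p ω)).withDensity
          fun ω => ENNReal.ofReal (q ω) := by
  rw [← withDensity_mul _ hp.ennreal_ofReal hq.ennreal_ofReal]
  refine withDensity_congr_ae ?_
  filter_upwards [hp0] with ω hω
  exact ENNReal.ofReal_mul hω

lemma IsDensityOf.integrable {Ω : Type*} [MeasurableSpace Ω] {ν P : Measure Ω}
    [IsFiniteMeasure P] {p : Ω → ℝ} (h : IsDensityOf ν P p) (hp : Measurable p)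
    (hp0 : ∀ᵐ ω ∂ν, 0 ≤ p ω) : Integrable p ν := by
  refine ⟨hp.aestronglyMeasurable, ?_⟩
  rw [hasFiniteIntegral_iff_ofReal hp0, ← setLIntegral_univ, ← withDensity_apply _ .univ,
    ← h]
  exact measure_lt_top P univ

lemma IsDensityOf.ae_imp_of_ae {Ω : Type*} [MeasurableSpace Ω] {ν P : Measure Ω}
    {p : Ω → ℝ} (h : IsDensityOf ν P p) (hp : Measurable p) {q : Ω → Prop}
    (hq : ∀ᵐ ω ∂P, q ω) : ∀ᵐ ω ∂ν, 0 < p ω → q ω := by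
  rw [h, ae_withDensity_iff hp.ennreal_ofReal] at hq
  simpa only [ne_eq, ENNReal.ofReal_eq_zero, not_le] using hq

section WithDensity

variable {Ω : Type*} [MeasurableSpace Ω] {ρ : Measure Ω} {W : Ω → ℝ}

lemma integral_withDensity_ofReal (hW : Measurable W) (hW0 : ∀ᵐ ω ∂ρ, 0 ≤ W ω) (u : Ω → ℝ) :
    ∫ ω, u ω ∂ρ.withDensity (fun ω => ENNReal.ofReal (W ω)) = ∫ ω, W ω * u ω ∂ρ := by
  rw [integral_withDensity_eq_integral_toReal_smul hW.ennreal_ofReal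
    (ae_of_all _ fun _ => ofReal_lt_top)]
  refine integral_congr_ae ?_
  filter_upwards [hW0] with ω hω
  rw [ENNReal.toReal_ofReal hω, smul_eq_mul]

lemma Integrable.withDensity_ofReal {u : Ω → ℝ} (hu : Integrable u ρ) (hW : Measurable W)
    {C : ℝ} (hWC : ∀ᵐ ω ∂ρ, W ω ∈ Icc 0 C) :
    Integrable u (ρ.withDensity fun ω => ENNReal.ofReal (W ω)) := by
  rw [integrable_withDensity_iff hW.ennreal_ofReal (ae_of_all _ fun _ => ofReal_lt_top)]
  refine (hu.bdd_mul hW.ennreal_ofReal.ennreal_toReal.aestronglyMeasurable (c := C) ?_).congr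
    (ae_of_all _ fun _ => mul_comm _ _)
  filter_upwards [hWC] with ω ⟨h0, hC⟩
  rwa [ENNReal.toReal_ofReal h0, Real.norm_eq_abs, abs_of_nonneg h0]

end WithDensity

section CondExpComap

variable {Ω β : Type*} [MeasurableSpace Ω] [mβ : MeasurableSpace β] {ρ : Measure Ω}
  [IsFiniteMeasure ρ] {f : Ω → β} {u v : Ω → ℝ}

lemma condExp_comap_ae_eq_of_setIntegral_preimage_eq (hf : Measurable f)
    (hu : Integrable u ρ) (hv : Integrable v ρ)
    (huv : ∀ B, MeasurableSet B → ∫ ω in f ⁻¹' B, u ω ∂ρ = ∫ ω in f ⁻¹' B, v ω ∂ρ) :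
    ρ[u | mβ.comap f] =ᵐ[ρ] ρ[v | mβ.comap f] := by
  refine (ae_eq_condExp_of_forall_setIntegral_eq hf.comap_le hu
    (fun _ _ _ => integrable_condExp.integrableOn) ?_
    stronglyMeasurable_condExp.aestronglyMeasurable).symm
  rintro _ ⟨B, hB, rfl⟩ -
  rw [setIntegral_condExp hf.comap_le hv ⟨B, hB, rfl⟩, huv B hB]

lemma abs_comp_le_of_setIntegral_preimage_eq (hf : Measurable f) {h : β → ℝ}
    (hh : Measurable h) (hu : Integrable u ρ) (hhf : Integrable (fun ω => h (f ω)) ρ)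
    (huh : ∀ B, MeasurableSet B → ∫ ω in f ⁻¹' B, u ω ∂ρ = ∫ ω in f ⁻¹' B, h (f ω) ∂ρ)
    {C : ℝ} (hC : ∀ᵐ ω ∂ρ, |u ω| ≤ C) :
    ∀ᵐ ω ∂ρ, |h (f ω)| ≤ C := by
  have hm := hf.comap_le
  have hcond : ρ[u | mβ.comap f] =ᵐ[ρ] fun ω => h (f ω) := by
    have := condExp_comap_ae_eq_of_setIntegral_preimage_eq hf hu hhf huh
    rwa [condExp_of_stronglyMeasurable hm (f := fun ω => h (f ω))
      (hh.comp (comap_measurable f)).stronglyMeasurable hhf] at this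
  have hle := condExp_mono (m := mβ.comap f) hu (integrable_const C)
    (hC.mono fun _ h => (abs_le.1 h).2)
  have hge := condExp_mono (m := mβ.comap f) (integrable_const (-C)) hu
    (hC.mono fun _ h => (abs_le.1 h).1)
  rw [condExp_const hm] at hle hge
  filter_upwards [hcond, hle, hge] with ω hω hle hge
  exact abs_le.2 ⟨hω ▸ hge, hω ▸ hle⟩

lemma integral_comp_mul_eq_of_setIntegral_preimage_eq (hf : Measurable f)
    (hu : Integrable u ρ) (hv : Integrable v ρ)
    (huv : ∀ B, MeasurableSet B → ∫ ω in f ⁻¹' B, u ω ∂ρ = ∫ ω in f ⁻¹' B, v ω ∂ρ)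
    {w : β → ℝ} (hw : Measurable w) {C : ℝ} (hwC : ∀ᵐ ω ∂ρ, |w (f ω)| ≤ C) :
    ∫ ω, w (f ω) * u ω ∂ρ = ∫ ω, w (f ω) * v ω ∂ρ := by
  have hm := hf.comap_le
  have hwf : StronglyMeasurable[mβ.comap f] (fun ω => w (f ω)) :=
    (hw.comp (comap_measurable f)).stronglyMeasurable
  have hwρ : AEStronglyMeasurable (fun ω => w (f ω)) ρ := (hw.comp hf).aestronglyMeasurable
  have hwu := hu.bdd_mul hwρ (c := C) hwC
  have hwv := hv.bdd_mul hwρ (c := C) hwC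
  calc ∫ ω, w (f ω) * u ω ∂ρ
      = ∫ ω, ρ[(fun ω => w (f ω)) * u | mβ.comap f] ω ∂ρ := (integral_condExp hm).symm
    _ = ∫ ω, w (f ω) * ρ[u | mβ.comap f] ω ∂ρ :=
        integral_congr_ae (condExp_mul_of_stronglyMeasurable_left hwf hwu hu)
    _ = ∫ ω, w (f ω) * ρ[v | mβ.comap f] ω ∂ρ := by
        refine integral_congr_ae ?_
        filter_upwards [condExp_comap_ae_eq_of_setIntegral_preimage_eq hf hu hv huv] with ω hω
        rw [hω]
    _ = ∫ ω, ρ[(fun ω => w (f ω)) * v | mβ.comap f] ω ∂ρ :=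
        integral_congr_ae (condExp_mul_of_stronglyMeasurable_left hwf hwv hv).symm
    _ = ∫ ω, w (f ω) * v ω ∂ρ := integral_condExp hm

lemma setIntegral_preimage_withDensity_eq (hf : Measurable f)
    (hu : Integrable u ρ) (hv : Integrable v ρ)
    (huv : ∀ B, MeasurableSet B → ∫ ω in f ⁻¹' B, u ω ∂ρ = ∫ ω in f ⁻¹' B, v ω ∂ρ)
    {w : β → ℝ} (hw : Measurable w) {C : ℝ} (hwC : ∀ᵐ ω ∂ρ, w (f ω) ∈ Icc 0 C)
    {B : Set β} (hB : MeasurableSet B) :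
    ∫ ω in f ⁻¹' B, u ω ∂ρ.withDensity (fun ω => ENNReal.ofReal (w (f ω)))
      = ∫ ω in f ⁻¹' B, v ω ∂ρ.withDensity (fun ω => ENNReal.ofReal (w (f ω))) := by
  have hwf : Measurable fun ω => w (f ω) := hw.comp hf
  have hw0 : ∀ᵐ ω ∂ρ.restrict (f ⁻¹' B), 0 ≤ w (f ω) :=
    ae_restrict_of_ae (hwC.mono fun _ h => h.1)
  rw [restrict_withDensity (hf hB), integral_withDensity_ofReal hwf hw0,
    integral_withDensity_ofReal hwf hw0]
  refine integral_comp_mul_eq_of_setIntegral_preimage_eq hf hu.restrict hv.restrict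
    (fun B' hB' => ?_) hw (C := C) (ae_restrict_of_ae ?_)
  · rw [Measure.restrict_restrict (hf hB'), ← preimage_inter, huv _ (hB'.inter hB)]
  · filter_upwards [hwC] with ω ⟨h0, hC⟩
    rwa [abs_of_nonneg h0]

end CondExpComap

section LinearTilt

variable {Ω : Type*} [MeasurableSpace Ω] {ρ : Measure Ω} {g : Ω → ℝ}

lemma isProbabilityMeasure_withDensity_one_add_mul [IsProbabilityMeasure ρ]
    (hg : Integrable g ρ) (hg0 : ∫ ω, g ω ∂ρ = 0) {t : ℝ} (ht : ∀ᵐ ω ∂ρ, 0 ≤ 1 + t * g ω) :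
    IsProbabilityMeasure (ρ.withDensity fun ω => ENNReal.ofReal (1 + t * g ω)) := by
  have hint : Integrable (fun ω => 1 + t * g ω) ρ := (integrable_const 1).add (hg.const_mul t)
  constructor
  rw [withDensity_apply _ MeasurableSet.univ, Measure.restrict_univ,
    ← ofReal_integral_eq_lintegral_ofReal hint ht, integral_add (integrable_const 1)
    (hg.const_mul t), integral_const_mul, hg0]
  simp

lemma ae_abs_sub_div_le {f : Ω → ℝ} {C : ℝ} (hf : ∀ᵐ ω ∂ρ, |f ω| ≤ C) (m : ℝ) {V : ℝ}
    (hV : 0 < V) : ∀ᵐ ω ∂ρ, |(f ω - m) / V| ≤ (C + |m|) / V := by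
  filter_upwards [hf] with ω hω
  rw [abs_div, abs_of_pos hV]
  exact div_le_div_of_nonneg_right ((abs_sub _ _).trans (by linarith)) hV.le

lemma exists_pos_ae_one_add_mul_mem_Icc {M : ℝ} (hg : ∀ᵐ ω ∂ρ, |g ω| ≤ M) :
    ∃ δ > 0, ∀ t : ℝ, |t| < δ → ∀ᵐ ω ∂ρ, 1 + t * g ω ∈ Icc 0 2 := by
  refine ⟨1 / (|M| + 1), by positivity, fun t ht => ?_⟩
  filter_upwards [hg] with ω hω
  have htg : |t * g ω| ≤ 1 := by
    rw [abs_mul]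
    calc |t| * |g ω| ≤ 1 / (|M| + 1) * (|M| + 1) :=
          mul_le_mul ht.le (hω.trans ((le_abs_self M).trans (by linarith))) (abs_nonneg _)
            (by positivity)
      _ = 1 := one_div_mul_cancel (by positivity)
  constructor <;> linarith [abs_le.1 htg]

lemma integral_sub_div_eq_zero [IsProbabilityMeasure ρ] {f : Ω → ℝ} (hf : Integrable f ρ)
    {m : ℝ} (hm : m = ∫ ω, f ω ∂ρ) (V : ℝ) : ∫ ω, (f ω - m) / V ∂ρ = 0 := by
  rw [integral_div, integral_sub hf (integrable_const m), integral_const, ← hm]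
  simp

lemma integral_withDensity_one_add_mul_centered_div [IsProbabilityMeasure ρ] {f : Ω → ℝ}
    (hf : Measurable f) {C : ℝ} (hfC : ∀ᵐ ω ∂ρ, |f ω| ≤ C)
    {m : ℝ} (hm : m = ∫ ω, f ω ∂ρ) {V : ℝ} (hV : V = ∫ ω, (f ω - m) ^ 2 ∂ρ) (hV0 : V ≠ 0)
    {t : ℝ} (ht : ∀ᵐ ω ∂ρ, 0 ≤ 1 + t * ((f ω - m) / V)) :
    ∫ ω, f ω ∂ρ.withDensity (fun ω => ENNReal.ofReal (1 + t * ((f ω - m) / V))) = m + t := by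
  have hfi : Integrable f ρ := Integrable.of_bound hf.aestronglyMeasurable C hfC
  have hsq : Integrable (fun ω => (f ω - m) ^ 2) ρ := by
    refine Integrable.of_bound ((hf.sub_const m).pow_const 2).aestronglyMeasurable
      ((C + |m|) ^ 2) ?_
    filter_upwards [hfC] with ω hω
    rw [Real.norm_eq_abs, abs_pow]
    exact pow_le_pow_left₀ (abs_nonneg _) ((abs_sub _ _).trans (by linarith)) 2
  have hcen : Integrable (fun ω => (f ω - m) / V) ρ := (hfi.sub (integrable_const m)).div_const V
  have hrest : Integrable (fun ω => (f ω - m) ^ 2 / V + m * ((f ω - m) / V)) ρ :=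
    (hsq.div_const V).add (hcen.const_mul m)
  rw [integral_withDensity_ofReal (by fun_prop) ht]
  calc ∫ ω, (1 + t * ((f ω - m) / V)) * f ω ∂ρ
      = ∫ ω, (f ω + t * ((f ω - m) ^ 2 / V + m * ((f ω - m) / V))) ∂ρ := by
        congr 1; ext ω; ring
    _ = m + t := by
        rw [integral_add hfi (hrest.const_mul t),
          integral_const_mul, integral_add (hsq.div_const V) (hcen.const_mul m),
          integral_const_mul, integral_sub_div_eq_zero hfi hm, integral_div, ← hm, ← hV,
          div_self hV0]
        ring

end LinearTilt

lemma abs_sqrt_one_add_mul_sub_one_div_le {t x : ℝ} (h : 0 ≤ 1 + t * x) :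
    |(√(1 + t * x) - 1) / t| ≤ |x| := by
  rcases eq_or_ne t 0 with rfl | ht
  · simp
  have hpos : 0 < √(1 + t * x) + 1 := by positivity
  have hslope : (√(1 + t * x) - 1) / t = x / (√(1 + t * x) + 1) := by
    rw [div_eq_div_iff ht hpos.ne']
    linear_combination Real.mul_self_sqrt h
  rw [hslope, abs_div, abs_of_pos hpos]
  exact div_le_self (abs_nonneg x) (by linarith [Real.sqrt_nonneg (1 + t * x)])

lemma abs_sqrt_one_add_mul_sub_one_div_sub_half_le {t x : ℝ} (h : 0 ≤ 1 + t * x) :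
    |(√(1 + t * x) - 1) / t - x / 2| ≤ 2 * |x| := by
  have hslope := abs_sqrt_one_add_mul_sub_one_div_le h
  have hhalf : |x / 2| = |x| / 2 := by rw [abs_div, abs_two]
  linarith [abs_sub ((√(1 + t * x) - 1) / t) (x / 2), abs_nonneg x]

lemma tendsto_sqrt_one_add_mul_sub_one_div (x : ℝ) :
    Tendsto (fun t : ℝ => (√(1 + t * x) - 1) / t) (𝓝[≠] 0) (𝓝 (x / 2)) := by
  have hd : HasDerivAt (fun t : ℝ => √(1 + t * x)) (x / 2) 0 := by
    have := ((hasDerivAt_id (0 : ℝ)).mul_const x).const_add 1 |>.sqrt (by simp)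
    simpa [div_eq_inv_mul] using this
  refine (hasDerivAt_iff_tendsto_slope.mp hd).congr' ?_
  filter_upwards with t
  simp [slope_def_field]

lemma tendsto_integral_sqrt_tilt_sq {Ω : Type*} [MeasurableSpace Ω] {ν : Measure Ω}
    {p g : Ω → ℝ} (hp : Measurable p) (hp_int : Integrable p ν) (hp0 : ∀ᵐ ω ∂ν, 0 ≤ p ω)
    (hg : Measurable g) {M : ℝ} (hgM : ∀ᵐ ω ∂ν, 0 < p ω → |g ω| ≤ M) :
    Tendsto (fun t : ℝ => ∫ ω, ((√(p ω * (1 + t * g ω)) - √(p ω)) / t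
      - (1/2) * g ω * √(p ω)) ^ 2 ∂ν) (𝓝[≠] 0) (𝓝 0) := by
  have hfactor : ∀ᵐ ω ∂ν, ∀ t : ℝ, ((√(p ω * (1 + t * g ω)) - √(p ω)) / t
      - (1/2) * g ω * √(p ω)) ^ 2 = p ω * ((√(1 + t * g ω) - 1) / t - g ω / 2) ^ 2 := by
    filter_upwards [hp0] with ω hω t
    rw [Real.sqrt_mul hω, ← Real.sq_sqrt hω, Real.sqrt_sq (Real.sqrt_nonneg _)]
    ring
  have hsmall : ∀ᶠ t : ℝ in 𝓝[≠] 0, |t| * M ≤ 1 := by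
    have : Tendsto (fun t : ℝ => |t| * M) (𝓝 0) (𝓝 0) := by
      simpa using (continuous_abs.tendsto (0 : ℝ)).mul_const M
    exact nhdsWithin_le_nhds (this.eventually (ge_mem_nhds one_pos))
  have key := tendsto_integral_filter_of_dominated_convergence (μ := ν) (l := 𝓝[≠] (0 : ℝ))
    (F := fun t ω => ((√(p ω * (1 + t * g ω)) - √(p ω)) / t - (1/2) * g ω * √(p ω)) ^ 2)
    (f := fun _ => (0 : ℝ)) (fun ω => (2 * M) ^ 2 * p ω)
    (Eventually.of_forall fun t => by fun_prop) ?_ (hp_int.const_mul _) ?_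
  · simpa using key
  · filter_upwards [hsmall] with t ht
    filter_upwards [hfactor, hp0, hgM] with ω hfac hω hωM
    rw [hfac, Real.norm_eq_abs, abs_of_nonneg (by positivity), mul_comm]
    rcases hω.eq_or_lt with h0 | hpos
    · simp [← h0]
    refine mul_le_mul_of_nonneg_right ?_ hω
    have hgω := hωM hpos
    have htg : |t * g ω| ≤ 1 := by
      rw [abs_mul]; nlinarith [abs_nonneg t]
    have hslope := abs_sqrt_one_add_mul_sub_one_div_sub_half_le
      (by linarith [neg_abs_le (t * g ω)] : 0 ≤ 1 + t * g ω)
    rw [← sq_abs]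
    exact pow_le_pow_left₀ (abs_nonneg _) (by linarith) 2
  · filter_upwards [hfactor] with ω hfac
    simp_rw [hfac]
    simpa using ((tendsto_sqrt_one_add_mul_sub_one_div (g ω)).sub_const (g ω / 2)).pow 2
      |>.const_mul (p ω)

lemma measurable_covariate : Measurable fun z : Obs X => z.2.1 := by fun_prop

lemma measurableSet_treatment_eq (a : Bool) : MeasurableSet {z : Obs X | z.2.2 = a} :=
  (measurable_snd.comp measurable_snd) (measurableSet_singleton a)

lemma setIntegral_covariate_treatment (P : Measure (Obs X)) (u : Obs X → ℝ) {B : Set X}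
    (hB : MeasurableSet B) (a : Bool) :
    ∫ z in {z : Obs X | z.2.1 ∈ B ∧ z.2.2 = a}, u z ∂P
      = ∫ z in (fun z : Obs X => z.2.1) ⁻¹' B, u z ∂P.restrict {z | z.2.2 = a} := by
  rw [Measure.restrict_restrict (measurable_covariate hB)]
  rfl

lemma measureReal_covariate_treatment (P : Measure (Obs X)) (B : Set X) (a : Bool) :
    P.real {z : Obs X | z.2.1 ∈ B ∧ z.2.2 = a}
      = ∫ z in (fun z : Obs X => z.2.1) ⁻¹' B,
          {z : Obs X | z.2.2 = a}.indicator (fun _ => (1 : ℝ)) z ∂P := by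
  rw [setIntegral_indicator (measurableSet_treatment_eq a)]
  simp only [integral_const, smul_eq_mul, mul_one, measureReal_restrict_apply_univ]
  rfl

lemma IsCondMean.setIntegral_preimage_eq {P : Measure (Obs X)} {a : Bool} {μa : X → ℝ}
    (h : IsCondMean P a μa) {B : Set X} (hB : MeasurableSet B) :
    ∫ z in (fun z : Obs X => z.2.1) ⁻¹' B, z.1 ∂P.restrict {z | z.2.2 = a}
      = ∫ z in (fun z : Obs X => z.2.1) ⁻¹' B, μa z.2.1 ∂P.restrict {z | z.2.2 = a} := by
  rw [← setIntegral_covariate_treatment _ _ hB, ← setIntegral_covariate_treatment _ _ hB]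
  exact h.2.2 B hB

section FiniteMeasure

variable {P : Measure (Obs X)} [IsFiniteMeasure P]

lemma IsPropensity.mul_measureReal_le {pi : X → ℝ} {eps : ℝ} (hpi : IsPropensity P pi)
    (hpi_range : ∀ᵐ z ∂P, pi z.2.1 ∈ Icc eps (1 - eps)) {B : Set X} (hB : MeasurableSet B)
    (a : Bool) :
    eps * P.real {z : Obs X | z.2.1 ∈ B} ≤ P.real {z : Obs X | z.2.1 ∈ B ∧ z.2.2 = a} := by
  have hpi_int : Integrable (fun z : Obs X => pi z.2.1) P :=
    Integrable.of_ae_mem_Icc (hpi.1.comp measurable_covariate).aestronglyMeasurable hpi_range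
  have hset (c : ℝ) :
      ∫ _ in {z : Obs X | z.2.1 ∈ B}, c ∂P = c * P.real {z : Obs X | z.2.1 ∈ B} := by
    rw [setIntegral_const, smul_eq_mul, mul_comm]
  have htrue := hpi.2 B hB
  change P.real ({z : Obs X | z.2.1 ∈ B} ∩ {z | z.2.2 = true}) = _ at htrue
  cases a
  · have hsplit := measureReal_inter_add_sdiff (μ := P) (s := {z : Obs X | z.2.1 ∈ B})
      (measurableSet_treatment_eq true)
    have hfalse : {z : Obs X | z.2.1 ∈ B} \ {z | z.2.2 = true}
        = {z : Obs X | z.2.1 ∈ B ∧ z.2.2 = false} := by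
      ext z; simp
    have hle : ∫ z in {z : Obs X | z.2.1 ∈ B}, pi z.2.1 ∂P
        ≤ ∫ _ in {z : Obs X | z.2.1 ∈ B}, (1 - eps) ∂P :=
      setIntegral_mono_ae hpi_int.integrableOn (integrableOn_const (measure_ne_top _ _))
        (hpi_range.mono fun _ h => h.2)
    rw [hfalse] at hsplit
    rw [hset] at hle
    linarith
  · have hge : ∫ _ in {z : Obs X | z.2.1 ∈ B}, eps ∂P
        ≤ ∫ z in {z : Obs X | z.2.1 ∈ B}, pi z.2.1 ∂P :=
      setIntegral_mono_ae (integrableOn_const (measure_ne_top _ _)) hpi_int.integrableOn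
        (hpi_range.mono fun _ h => h.1)
    rw [hset] at hge
    exact hge.trans htrue.ge

lemma IsPropensity.ae_of_ae_restrict_treatment {pi : X → ℝ} {eps : ℝ} (hpi : IsPropensity P pi)
    (hpi_range : ∀ᵐ z ∂P, pi z.2.1 ∈ Icc eps (1 - eps)) (heps : 0 < eps)
    {S : Set X} (hS : MeasurableSet S) (a : Bool)
    (h : ∀ᵐ z ∂P.restrict {z | z.2.2 = a}, z.2.1 ∈ S) : ∀ᵐ z ∂P, z.2.1 ∈ S := by
  have hnull : P {z : Obs X | z.2.1 ∈ Sᶜ ∧ z.2.2 = a} = 0 := by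
    rw [ae_restrict_iff' (measurableSet_treatment_eq a), ae_iff] at h
    convert h using 2
    ext z
    simp [and_comm]
  have hle := hpi.mul_measureReal_le hpi_range hS.compl a
  rw [measureReal_def P {z : Obs X | z.2.1 ∈ Sᶜ ∧ z.2.2 = a}, hnull, ENNReal.toReal_zero] at hle
  rw [ae_iff]
  exact (measureReal_eq_zero_iff (measure_ne_top _ _)).1 <| le_antisymm
    (nonpos_of_mul_nonpos_right hle heps) measureReal_nonneg

lemma IsCondMean.ae_abs_le {a : Bool} {μa pi : X → ℝ} {eps : ℝ} (h : IsCondMean P a μa)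
    (hpi : IsPropensity P pi) (hpi_range : ∀ᵐ z ∂P, pi z.2.1 ∈ Icc eps (1 - eps))
    (heps : 0 < eps) {C : ℝ} (hY : ∀ᵐ z ∂P, |z.1| ≤ C) : ∀ᵐ z ∂P, |μa z.2.1| ≤ C := by
  have hYint : Integrable (fun z : Obs X => z.1) P :=
    Integrable.of_bound measurable_fst.aestronglyMeasurable C hY
  exact hpi.ae_of_ae_restrict_treatment hpi_range heps
    (measurableSet_le h.1.abs measurable_const) a
    (abs_comp_le_of_setIntegral_preimage_eq measurable_covariate h.1 hYint.restrict
      h.2.1.restrict (fun _ hB => h.setIntegral_preimage_eq hB) (ae_restrict_of_ae hY))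

lemma IsCondMean.withDensity {a : Bool} {μa : X → ℝ} (h : IsCondMean P a μa)
    (hY : Integrable (fun z : Obs X => z.1) P) {w : X → ℝ} (hw : Measurable w)
    {C : ℝ} (hwC : ∀ᵐ z ∂P, w z.2.1 ∈ Icc 0 C) :
    IsCondMean (P.withDensity fun z => ENNReal.ofReal (w z.2.1)) a μa := by
  refine ⟨h.1, Integrable.withDensity_ofReal h.2.1 (hw.comp measurable_covariate) hwC,
    fun B hB => ?_⟩
  rw [setIntegral_covariate_treatment _ _ hB, setIntegral_covariate_treatment _ _ hB,
    restrict_withDensity (measurableSet_treatment_eq a)]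
  exact setIntegral_preimage_withDensity_eq measurable_covariate hY.restrict h.2.1.restrict
    (fun _ hB' => h.setIntegral_preimage_eq hB') hw (ae_restrict_of_ae hwC) hB

lemma IsPropensity.withDensity {pi : X → ℝ} (hpi : IsPropensity P pi)
    (hpi_int : Integrable (fun z : Obs X => pi z.2.1) P) {w : X → ℝ}
    (hw : Measurable w) {C : ℝ} (hwC : ∀ᵐ z ∂P, w z.2.1 ∈ Icc 0 C) :
    IsPropensity (P.withDensity fun z => ENNReal.ofReal (w z.2.1)) pi := by
  have hind : Integrable ({z : Obs X | z.2.2 = true}.indicator fun _ => (1 : ℝ)) P :=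
    (integrable_const 1).indicator (measurableSet_treatment_eq true)
  refine ⟨hpi.1, fun B hB => ?_⟩
  rw [← measureReal_def, measureReal_covariate_treatment]
  refine setIntegral_preimage_withDensity_eq measurable_covariate hind hpi_int
    (fun B' hB' => ?_) hw hwC hB
  rw [← measureReal_covariate_treatment]
  exact hpi.2 B' hB'

end FiniteMeasure

theorem ate_beta_coordinate_submodel_general
    (ν : Measure (Obs X))
    (P0 : Measure (Obs X)) [IsProbabilityMeasure P0]
    (p0 : Obs X → ℝ) (hp0_meas : Measurable p0) (hp0_nonneg : ∀ᵐ z ∂ν, 0 ≤ p0 z)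
    (hp0 : IsDensityOf ν P0 p0)
    (CY eps : ℝ) (heps : 0 < eps)
    (hY : ∀ᵐ z ∂P0, |z.1| ≤ CY)
    (μ : Bool → X → ℝ) (hμ : ∀ a, IsCondMean P0 a (μ a))
    (pi : X → ℝ) (hpi : IsPropensity P0 pi)
    (hpi_range : ∀ᵐ z ∂P0, pi z.2.1 ∈ Set.Icc eps (1 - eps))
    -- τ, β₀, Var₀(τ(X)) > 0 and the score g_β
    (τ : X → ℝ) (hτ : τ = fun x => μ true x - μ false x)
    (β0 : ℝ) (hβ0 : β0 = ∫ z, τ z.2.1 ∂P0)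
    (V : ℝ) (hV : V = ∫ z, (τ z.2.1 - β0) ^ 2 ∂P0) (hVpos : 0 < V)
    (gβ : X → ℝ) (hgβ : gβ = fun x => (τ x - β0) / V)
    -- the linear tilt family
    (Pt : ℝ → Measure (Obs X))
    (hPt : Pt = fun t => ν.withDensity
      (fun z => ENNReal.ofReal (p0 z * (1 + t * gβ z.2.1)))) :
    ∃ δ > 0,
      -- (1) {P_t} is a regular (QMD) submodel through P₀ with score g_β(X)
      Pt 0 = P0 ∧
      (∀ t : ℝ, |t| < δ → IsProbabilityMeasure (Pt t)) ∧
      MemLp (fun z : Obs X => gβ z.2.1) 2 P0 ∧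
      (∫ z, gβ z.2.1 ∂P0 = 0) ∧
      Tendsto (fun t : ℝ => ∫ z,
          ((Real.sqrt (p0 z * (1 + t * gβ z.2.1)) - Real.sqrt (p0 z)) / t
            - (1/2) * gβ z.2.1 * Real.sqrt (p0 z)) ^ 2 ∂ν) (𝓝[≠] (0:ℝ)) (𝓝 0) ∧
      -- (2) the conditional outcome means and the propensity are unchanged
      (∀ t : ℝ, |t| < δ → (∀ a, IsCondMean (Pt t) a (μ a)) ∧ IsPropensity (Pt t) pi) ∧
      -- (3) β moves at exactly unit rate
      (∀ t : ℝ, |t| < δ →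
        ∫ z, (μ true z.2.1 - μ false z.2.1) ∂(Pt t) = β0 + t) := by
  have hτm : Measurable τ := hτ ▸ (hμ true).1.sub (hμ false).1
  have hτ_bdd : ∀ᵐ z ∂P0, |τ z.2.1| ≤ CY + CY := by
    filter_upwards [(hμ true).ae_abs_le hpi hpi_range heps hY,
      (hμ false).ae_abs_le hpi hpi_range heps hY] with z h1 h0
    exact hτ ▸ (abs_sub _ _).trans (add_le_add h1 h0)
  have hg_bdd : ∀ᵐ z ∂P0, |gβ z.2.1| ≤ (CY + CY + |β0|) / V := by
    simpa only [hgβ] using ae_abs_sub_div_le hτ_bdd β0 hVpos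
  have hgm : Measurable gβ := hgβ ▸ (hτm.sub_const β0).div_const V
  have hgX : Measurable fun z : Obs X => gβ z.2.1 := hgm.comp measurable_covariate
  have hτX : Measurable fun z : Obs X => τ z.2.1 := hτm.comp measurable_covariate
  have hg_mean : ∫ z, gβ z.2.1 ∂P0 = 0 := by
    simpa only [hgβ] using integral_sub_div_eq_zero
      (Integrable.of_bound hτX.aestronglyMeasurable _ hτ_bdd) hβ0 V
  have hPt_eq (t : ℝ) : Pt t = P0.withDensity fun z => ENNReal.ofReal (1 + t * gβ z.2.1) := by
    rw [hPt, hp0]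
    exact withDensity_ofReal_mul hp0_meas (by fun_prop) hp0_nonneg
  obtain ⟨δ, hδ, htilt⟩ := exists_pos_ae_one_add_mul_mem_Icc hg_bdd
  refine ⟨δ, hδ, by simp [hPt_eq], fun t ht => ?_,
    MemLp.of_bound hgX.aestronglyMeasurable _ hg_bdd, hg_mean,
    tendsto_integral_sqrt_tilt_sq hp0_meas (hp0.integrable hp0_meas hp0_nonneg) hp0_nonneg hgX
      (hp0.ae_imp_of_ae hp0_meas hg_bdd), fun t ht => ⟨fun a => ?_, ?_⟩, fun t ht => ?_⟩ <;>
    rw [hPt_eq]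
  · exact isProbabilityMeasure_withDensity_one_add_mul
      (Integrable.of_bound hgX.aestronglyMeasurable _ hg_bdd) hg_mean
      ((htilt t ht).mono fun _ h => h.1)
  · exact (hμ a).withDensity (w := fun x => 1 + t * gβ x)
      (Integrable.of_bound measurable_fst.aestronglyMeasurable CY hY) (by fun_prop) (htilt t ht)
  · exact hpi.withDensity (w := fun x => 1 + t * gβ x)
      (Integrable.of_ae_mem_Icc (hpi.1.comp measurable_covariate).aestronglyMeasurable
        hpi_range) (by fun_prop) (htilt t ht)
  · subst hgβ hτ
    exact integral_withDensity_one_add_mul_centered_div hτX hτ_bdd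
      hβ0 hV hVpos.ne' ((htilt t ht).mono fun _ h => h.1)

theorem ate_beta_coordinate_submodel
    (ν : Measure (Obs X)) [SigmaFinite ν]
    (P0 : Measure (Obs X)) [IsProbabilityMeasure P0]
    (p0 : Obs X → ℝ) (hp0_meas : Measurable p0) (hp0_nonneg : ∀ᵐ z ∂ν, 0 ≤ p0 z)
    (hp0 : IsDensityOf ν P0 p0)
    (CY eps : ℝ) (heps : 0 < eps)
    (hY : ∀ᵐ z ∂P0, |z.1| ≤ CY)
    (μ : Bool → X → ℝ) (hμ : ∀ a, IsCondMean P0 a (μ a))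
    (pi : X → ℝ) (hpi : IsPropensity P0 pi)
    (hpi_range : ∀ᵐ z ∂P0, pi z.2.1 ∈ Set.Icc eps (1 - eps))
    -- τ, β₀, Var₀(τ(X)) > 0 and the score g_β
    (τ : X → ℝ) (hτ : τ = fun x => μ true x - μ false x)
    (β0 : ℝ) (hβ0 : β0 = ∫ z, τ z.2.1 ∂P0)
    (V : ℝ) (hV : V = ∫ z, (τ z.2.1 - β0) ^ 2 ∂P0) (hVpos : 0 < V)
    (gβ : X → ℝ) (hgβ : gβ = fun x => (τ x - β0) / V)
    -- the linear tilt family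
    (Pt : ℝ → Measure (Obs X))
    (hPt : Pt = fun t => ν.withDensity
      (fun z => ENNReal.ofReal (p0 z * (1 + t * gβ z.2.1)))) :
    ∃ δ > 0,
      -- (1) {P_t} is a regular (QMD) submodel through P₀ with score g_β(X)
      Pt 0 = P0 ∧
      (∀ t : ℝ, |t| < δ → IsProbabilityMeasure (Pt t)) ∧
      MemLp (fun z : Obs X => gβ z.2.1) 2 P0 ∧
      (∫ z, gβ z.2.1 ∂P0 = 0) ∧
      Tendsto (fun t : ℝ => ∫ z,
          ((Real.sqrt (p0 z * (1 + t * gβ z.2.1)) - Real.sqrt (p0 z)) / t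
            - (1/2) * gβ z.2.1 * Real.sqrt (p0 z)) ^ 2 ∂ν) (𝓝[≠] (0:ℝ)) (𝓝 0) ∧
      -- (2) the conditional outcome means and the propensity are unchanged
      (∀ t : ℝ, |t| < δ → (∀ a, IsCondMean (Pt t) a (μ a)) ∧ IsPropensity (Pt t) pi) ∧
      -- (3) β moves at exactly unit rate
      (∀ t : ℝ, |t| < δ →
        ∫ z, (μ true z.2.1 - μ false z.2.1) ∂(Pt t) = β0 + t) :=
  ate_beta_coordinate_submodel_general ν P0 p0 hp0_meas hp0_nonneg hp0 CY eps heps hY μ hμ pi hpi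
    hpi_range τ hτ β0 hβ0 V hV hVpos gβ hgβ Pt hPt

end ATE
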